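/- arXiv:1903.11674 — 4 statements merged into one kernel-verified Lean document; each statement's English description precedes it below -/
import Mathlib

section
/- (Ballot theorem, probabilistic form.) Let p > q ≥ 0 be natural numbers and consider a uniformly random permutation (ordering) of p + q ballots, of which p are for candidate P and q are for candidate Q. The probability that in every nonempty prefix of the ordering, the number of P-ballots strictly exceeds the number of Q-ballots, equals (p − q)/(p + q). -/
open Finset
open scoped Classical

namespace BallotAux

def Pred (n p : ℕ) (f : Fin n → Bool) : Prop :=
  (Finset.univ.filter (fun i => f i = true)).card = p ∧
  ∀ m : ℕ, 1 ≤ m → m ≤ n →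
    (Finset.univ.filter (fun i : Fin n => (i : ℕ) < m ∧ f i = true)).card >
    (Finset.univ.filter (fun i : Fin n => (i : ℕ) < m ∧ f i = false)).card

noncomputable def B (n p : ℕ) : ℕ := (Finset.univ.filter (Pred n p)).card

lemma falses_card (n : ℕ) (f : Fin n → Bool) :
    (univ.filter (fun i => f i = false)).card
      = n - (univ.filter (fun i => f i = true)).card := by
  have h := Finset.card_filter_add_card_filter_not
      (s := (univ : Finset (Fin n))) (p := fun i => f i = true)
  simp only [Bool.not_eq_true] at h
  have hu : (univ : Finset (Fin n)).card = n := by simp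
  omega

lemma prefix_card_castSucc (n m : ℕ) (hm : m ≤ n) (f : Fin (n + 1) → Bool) (b : Bool) :
    (univ.filter (fun i : Fin (n + 1) => (i : ℕ) < m ∧ f i = b)).card
      = (univ.filter (fun i : Fin n => (i : ℕ) < m ∧ f i.castSucc = b)).card := by
  rw [Finset.card_filter, Finset.card_filter, Fin.sum_univ_castSucc]
  simp [Fin.val_last, show ¬ (n < m) by omega]

lemma total_card_castSucc (n : ℕ) (f : Fin (n + 1) → Bool) (b : Bool) :
    (univ.filter (fun i : Fin (n + 1) => f i = b)).card
      = (univ.filter (fun i : Fin n => f i.castSucc = b)).card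
        + (if f (Fin.last n) = b then 1 else 0) := by
  rw [Finset.card_filter, Finset.card_filter, Fin.sum_univ_castSucc]

lemma prefix_filter_top (n : ℕ) (f : Fin n → Bool) (b : Bool) :
    univ.filter (fun i : Fin n => (i : ℕ) < n ∧ f i = b)
      = univ.filter (fun i : Fin n => f i = b) := by
  apply Finset.filter_congr
  intro i _
  simp [i.isLt]

lemma trues_le (n : ℕ) (f : Fin n → Bool) :
    (univ.filter (fun i => f i = true)).card ≤ n := by
  calc (univ.filter (fun i => f i = true)).card ≤ (univ : Finset (Fin n)).card :=
        Finset.card_filter_le _ _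
    _ = n := by simp

lemma B_zero (n p : ℕ) (hn : 1 ≤ n) (h : 2 * p ≤ n) : B n p = 0 := by
  rw [B, Finset.card_eq_zero, Finset.filter_eq_empty_iff]
  rintro f - ⟨ht, hb⟩
  have h1 := hb n hn le_rfl
  rw [prefix_filter_top, prefix_filter_top, falses_card, ht] at h1
  omega

lemma B_eq_zero_of_lt (n p : ℕ) (h : n < p) : B n p = 0 := by
  rw [B, Finset.card_eq_zero, Finset.filter_eq_empty_iff]
  rintro f - ⟨ht, -⟩
  have := trues_le n f
  omega

lemma B_zero_zero : B 0 0 = 1 := by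
  rw [B]
  rw [Finset.filter_true_of_mem]
  · simp
  · intro f _
    constructor
    · simp
    · intro m h1 h0; omega

lemma card_trues (n p : ℕ) :
    (univ.filter (fun f : Fin n → Bool =>
      (univ.filter (fun i => f i = true)).card = p)).card = n.choose p := by
  rw [show n.choose p = ((univ : Finset (Fin n)).powersetCard p).card by
        rw [Finset.card_powersetCard]; simp]
  refine Finset.card_bij' (fun f _ => univ.filter (fun i => f i = true))
    (fun s _ => fun i => decide (i ∈ s)) ?_ ?_ ?_ ?_
  · intro f hf
    simp only [Finset.mem_filter] at hf
    simp [Finset.mem_powersetCard, hf.2]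
  · intro s hs
    simp only [Finset.mem_powersetCard] at hs
    simp only [Finset.mem_filter, Finset.mem_univ, true_and]
    rw [show (univ.filter (fun i => decide (i ∈ s) = true)) = s by ext i; simp]
    exact hs.2
  · intro f hf
    funext i
    simp
  · intro s hs
    ext i
    simp

lemma card_last_true (n p : ℕ) (hp : 1 ≤ p) (h2 : n + 2 ≤ 2 * p) :
    ((univ.filter (Pred (n + 1) p)).filter (fun f => f (Fin.last n) = true)).card
      = B n (p - 1) := by
  rw [B]
  refine Finset.card_bij' (fun f _ => (fun i : Fin n => f i.castSucc))
    (fun g _ => Fin.snoc g true) ?_ ?_ ?_ ?_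
  · intro f hf
    simp only [Finset.mem_filter, Finset.mem_univ, true_and] at hf
    obtain ⟨⟨ht, hb⟩, hlast⟩ := hf
    simp only [Finset.mem_filter, Finset.mem_univ, true_and, Pred]
    constructor
    · have := total_card_castSucc n f true
      rw [ht, hlast] at this
      simp at this
      omega
    · intro m h1 hm
      have := hb m h1 (by omega)
      rwa [prefix_card_castSucc n m hm, prefix_card_castSucc n m hm] at this
  · intro g hg
    simp only [Finset.mem_filter, Finset.mem_univ, true_and, Pred] at hg
    obtain ⟨ht, hb⟩ := hg
    have htr : (univ.filter (fun i : Fin (n + 1) => (Fin.snoc g true : Fin (n + 1) → Bool) i = true)).card = p := by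
      rw [total_card_castSucc]
      simp only [Fin.snoc_castSucc, Fin.snoc_last]
      rw [ht]
      simp
      omega
    simp only [Finset.mem_filter, Finset.mem_univ, true_and, Pred]
    refine ⟨⟨htr, ?_⟩, by simp⟩
    intro m h1 hm
    rcases le_or_gt m n with hmn | hmn
    · rw [prefix_card_castSucc n m hmn, prefix_card_castSucc n m hmn]
      simp only [Fin.snoc_castSucc]
      exact hb m h1 hmn
    · have hm1 : m = n + 1 := by omega
      subst hm1
      rw [prefix_filter_top, prefix_filter_top, falses_card, htr]
      omega
  · intro f hf
    simp only [Finset.mem_filter] at hf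
    have hlast : f (Fin.last n) = true := hf.2
    show Fin.snoc (Fin.init f) true = f
    rw [← hlast]
    exact Fin.snoc_init_self f
  · intro g hg
    funext i
    simp [Fin.snoc_castSucc]

lemma card_last_false (n p : ℕ) (h2 : n + 2 ≤ 2 * p) :
    ((univ.filter (Pred (n + 1) p)).filter (fun f => f (Fin.last n) = false)).card
      = B n p := by
  rw [B]
  refine Finset.card_bij' (fun f _ => (fun i : Fin n => f i.castSucc))
    (fun g _ => Fin.snoc g false) ?_ ?_ ?_ ?_
  · intro f hf
    simp only [Finset.mem_filter, Finset.mem_univ, true_and] at hf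
    obtain ⟨⟨ht, hb⟩, hlast⟩ := hf
    simp only [Finset.mem_filter, Finset.mem_univ, true_and, Pred]
    constructor
    · have := total_card_castSucc n f true
      rw [ht, hlast] at this
      simp at this
      omega
    · intro m h1 hm
      have := hb m h1 (by omega)
      rwa [prefix_card_castSucc n m hm, prefix_card_castSucc n m hm] at this
  · intro g hg
    simp only [Finset.mem_filter, Finset.mem_univ, true_and, Pred] at hg
    obtain ⟨ht, hb⟩ := hg
    have hple : p ≤ n := ht ▸ trues_le n g
    have htr : (univ.filter (fun i : Fin (n + 1) => (Fin.snoc g false : Fin (n + 1) → Bool) i = true)).card = p := by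
      rw [total_card_castSucc]
      simp only [Fin.snoc_castSucc, Fin.snoc_last]
      rw [ht]
      simp
    simp only [Finset.mem_filter, Finset.mem_univ, true_and, Pred]
    refine ⟨⟨htr, ?_⟩, by simp⟩
    intro m h1 hm
    rcases le_or_gt m n with hmn | hmn
    · rw [prefix_card_castSucc n m hmn, prefix_card_castSucc n m hmn]
      simp only [Fin.snoc_castSucc]
      exact hb m h1 hmn
    · have hm1 : m = n + 1 := by omega
      subst hm1
      rw [prefix_filter_top, prefix_filter_top, falses_card, htr]
      omega
  · intro f hf
    simp only [Finset.mem_filter] at hf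
    have hlast : f (Fin.last n) = false := hf.2
    show Fin.snoc (Fin.init f) false = f
    rw [← hlast]
    exact Fin.snoc_init_self f
  · intro g hg
    funext i
    simp [Fin.snoc_castSucc]

lemma B_succ (n p : ℕ) (hp : 1 ≤ p) (h2 : n + 2 ≤ 2 * p) :
    B (n + 1) p = B n (p - 1) + B n p := by
  have hsplit := Finset.card_filter_add_card_filter_not
    (s := (univ.filter (Pred (n + 1) p))) (p := fun f => f (Fin.last n) = true)
  simp only [Bool.not_eq_true] at hsplit
  rw [card_last_true n p hp h2, card_last_false n p h2] at hsplit
  rw [B, ← hsplit]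

lemma B_formula : ∀ n p : ℕ, 1 ≤ n → B n p * n = (2 * p - n) * n.choose p := by
  intro n
  induction n with
  | zero => intro p h; omega
  | succ n ih =>
    intro p _
    rcases Nat.eq_zero_or_pos p with hp0 | hp
    · subst hp0
      rw [B_zero (n + 1) 0 (by omega) (by omega)]
      simp
    · by_cases h2 : 2 * p ≤ n + 1
      · rw [B_zero (n + 1) p (by omega) h2]
        rw [show 2 * p - (n + 1) = 0 by omega]
        ring
      · have h2' : n + 2 ≤ 2 * p := by omega
        rw [B_succ n p hp h2']
        by_cases hpn : p = n + 1
        · subst hpn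
          rw [B_eq_zero_of_lt n (n + 1) (by omega)]
          have hBnn : B n n = 1 := by
            rcases Nat.eq_zero_or_pos n with h0 | h0
            · subst h0; exact B_zero_zero
            · have h := ih n h0
              rw [Nat.choose_self] at h
              have h' : B n n * n = 1 * n := by omega
              exact Nat.eq_of_mul_eq_mul_right h0 h'
          rw [show n + 1 - 1 = n by omega, hBnn, Nat.choose_self]
          omega
        · rcases lt_or_ge (n + 1) p with hbig | hsmall
          · rw [B_eq_zero_of_lt n (p - 1) (by omega), B_eq_zero_of_lt n p (by omega),
              Nat.choose_eq_zero_of_lt hbig]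
            ring
          obtain ⟨k, rfl⟩ : ∃ k, p = k + 1 := ⟨p - 1, by omega⟩
          have hkn : k + 1 ≤ n := by omega
          have hn0 : 0 < n := by omega
          have e1 := ih k hn0
          have e2 := ih (k + 1) hn0
          have key := Nat.choose_succ_right_eq n k
          have hn2k : n ≤ 2 * k := by omega
          rw [show k + 1 - 1 = k by omega, Nat.choose_succ_succ']
          apply Nat.eq_of_mul_eq_mul_right hn0
          zify [hn2k, show k ≤ n by omega, show n ≤ 2 * (k + 1) by omega,
            show n + 1 ≤ 2 * (k + 1) by omega] at e1 e2 key ⊢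
          linear_combination ((n : ℤ) + 1) * e1 + ((n : ℤ) + 1) * e2 + 2 * key

end BallotAux
theorem stmt_2 (p q : ℕ) (hq : 0 ≤ q) (hpq : q < p) :
    (((Finset.univ.filter (fun f : Fin (p + q) → Bool =>
          (Finset.univ.filter (fun i => f i = true)).card = p ∧
          ∀ m : ℕ, 1 ≤ m → m ≤ p + q →
            (Finset.univ.filter (fun i : Fin (p + q) => (i : ℕ) < m ∧ f i = true)).card >
            (Finset.univ.filter (fun i : Fin (p + q) => (i : ℕ) < m ∧ f i = false)).card)).card : ℝ)
      / ((Finset.univ.filter (fun f : Fin (p + q) → Bool =>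
          (Finset.univ.filter (fun i => f i = true)).card = p)).card : ℝ))
      = ((p : ℝ) - q) / ((p : ℝ) + q) := by
  have hnum : (Finset.univ.filter (fun f : Fin (p + q) → Bool =>
          (Finset.univ.filter (fun i => f i = true)).card = p ∧
          ∀ m : ℕ, 1 ≤ m → m ≤ p + q →
            (Finset.univ.filter (fun i : Fin (p + q) => (i : ℕ) < m ∧ f i = true)).card >
            (Finset.univ.filter (fun i : Fin (p + q) => (i : ℕ) < m ∧ f i = false)).card)).card
      = BallotAux.B (p + q) p := by
    rw [BallotAux.B]
    exact congrArg Finset.card (Finset.filter_congr fun f _ => Iff.rfl)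
  rw [hnum, BallotAux.card_trues]
  clear hnum
  have hform := BallotAux.B_formula (p + q) p (by omega)
  have hsub : 2 * p - (p + q) = p - q := by omega
  rw [hsub] at hform
  have hchoose : 0 < (p + q).choose p := Nat.choose_pos (by omega)
  have hR : (BallotAux.B (p + q) p : ℝ) * ((p : ℝ) + q)
      = ((p : ℝ) - q) * ((p + q).choose p : ℝ) := by
    have := congrArg (fun x : ℕ => (x : ℝ)) hform
    push_cast [show q ≤ p from hpq.le] at this
    convert this using 2
  have h1 : ((p : ℝ) + q) ≠ 0 := by
    have h0 : (0 : ℝ) < (p : ℝ) + q := by exact_mod_cast (show 0 < p + q by omega)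
    exact h0.ne'
  have h2 : (((p + q).choose p : ℕ) : ℝ) ≠ 0 := by
    exact_mod_cast hchoose.ne'
  field_simp
  nlinarith [hR]
end

section
/- Let k be an even positive natural number with k < n/2 and n ≥ 2. Then (∏_{i=0}^{k−1} 1/(n−i)) · (k! / ((k/2)!))² < (k/(n−k))^k. -/
lemma fact_le_pow_mul_fact (m d : ℕ) : (m + d).factorial ≤ (m + d) ^ d * m.factorial := by
  induction d with
  | zero => simp
  | succ d ih =>
    have h1 : (m + (d + 1)).factorial = (m + d + 1) * (m + d).factorial := by
      rw [← Nat.add_assoc]; exact Nat.factorial_succ _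
    rw [h1]
    calc (m + d + 1) * (m + d).factorial
        ≤ (m + d + 1) * ((m + d) ^ d * m.factorial) := Nat.mul_le_mul_left _ ih
      _ ≤ (m + d + 1) * ((m + d + 1) ^ d * m.factorial) := by
          exact Nat.mul_le_mul_left _ (Nat.mul_le_mul_right _ (Nat.pow_le_pow_left (Nat.le_succ _) d))
      _ = (m + (d + 1)) ^ (d + 1) * m.factorial := by ring_nf

theorem stmt_6 (n k : ℕ) (hk : 0 < k) (hke : Even k) (hkn : 2 * k < n) (hn : 2 ≤ n) :
    (∏ i ∈ Finset.range k, (1 : ℝ) / ((n : ℝ) - i)) *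
      (((k.factorial : ℝ) / ((k / 2).factorial : ℝ)) ^ 2)
      < ((k : ℝ) / ((n : ℝ) - k)) ^ k := by
  have hkn' : (k : ℝ) < (n : ℝ) - k := by
    have h2 : ((2 * k : ℕ) : ℝ) < n := by exact_mod_cast hkn
    push_cast at h2
    linarith
  have hnk0 : (0 : ℝ) < (n : ℝ) - k := lt_trans (by exact_mod_cast hk) hkn'
  -- product bound
  have hprod : (∏ i ∈ Finset.range k, (1 : ℝ) / ((n : ℝ) - i)) < (1 / ((n : ℝ) - k)) ^ k := by
    have heq : (1 / ((n : ℝ) - k)) ^ k = ∏ _i ∈ Finset.range k, 1 / ((n : ℝ) - k) := by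
      rw [Finset.prod_const, Finset.card_range]
    rw [heq]
    apply Finset.prod_lt_prod
    · intro i hi
      have hi' : (i : ℝ) < k := by exact_mod_cast Finset.mem_range.mp hi
      have : (0 : ℝ) < (n : ℝ) - i := by linarith
      positivity
    · intro i hi
      have hi' : (i : ℝ) < k := by exact_mod_cast Finset.mem_range.mp hi
      apply one_div_le_one_div_of_le hnk0
      linarith
    · refine ⟨0, Finset.mem_range.mpr hk, ?_⟩
      apply one_div_lt_one_div_of_lt hnk0
      have hk' : (0 : ℝ) < k := by exact_mod_cast hk
      simp only [Nat.cast_zero, sub_zero]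
      linarith
  -- factorial bound
  have hfact : (((k.factorial : ℝ) / ((k / 2).factorial : ℝ)) ^ 2) ≤ (k : ℝ) ^ k := by
    have hhalf : k / 2 + k / 2 = k := by
      obtain ⟨m, hm⟩ := hke
      omega
    have hnat : k.factorial ≤ k ^ (k / 2) * (k / 2).factorial := by
      have := fact_le_pow_mul_fact (k / 2) (k / 2)
      rwa [hhalf] at this
    have hpos : (0 : ℝ) < ((k / 2).factorial : ℝ) := by exact_mod_cast (k / 2).factorial_pos
    rw [div_pow, div_le_iff₀ (by positivity)]
    have : ((k.factorial : ℝ)) ≤ (k : ℝ) ^ (k / 2) * ((k / 2).factorial : ℝ) := by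
      exact_mod_cast hnat
    calc (k.factorial : ℝ) ^ 2 ≤ ((k : ℝ) ^ (k / 2) * ((k / 2).factorial : ℝ)) ^ 2 := by
          apply pow_le_pow_left₀ (by positivity) this
      _ = (k : ℝ) ^ k * ((k / 2).factorial : ℝ) ^ 2 := by
          rw [mul_pow, ← pow_mul]
          congr 2
          omega
  have hfpos : (0 : ℝ) < (((k.factorial : ℝ) / ((k / 2).factorial : ℝ)) ^ 2) := by
    have h1 : (0 : ℝ) < (k.factorial : ℝ) := by exact_mod_cast k.factorial_pos
    have h2 : (0 : ℝ) < ((k / 2).factorial : ℝ) := by exact_mod_cast (k / 2).factorial_pos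
    positivity
  calc (∏ i ∈ Finset.range k, (1 : ℝ) / ((n : ℝ) - i)) *
      (((k.factorial : ℝ) / ((k / 2).factorial : ℝ)) ^ 2)
      < (1 / ((n : ℝ) - k)) ^ k * (k : ℝ) ^ k :=
        mul_lt_mul hprod hfact hfpos (by positivity)
    _ = ((k : ℝ) / ((n : ℝ) - k)) ^ k := by
        rw [← mul_pow, one_div_mul_eq_div]
end

section
/- There exists a constant C > 0 and N such that for all n ≥ N, ∑_{i=1}^{n} n · n^{(n−i)/n} ≤ C · n³ / ln n. -/
theorem stmt_10 :
    ∃ C > (0 : ℝ), ∃ N : ℕ, ∀ n : ℕ, N ≤ n →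
      ∑ i ∈ Finset.Icc 1 n, (n : ℝ) * (n : ℝ) ^ (((n : ℝ) - i) / n)
        ≤ C * (n : ℝ) ^ 3 / Real.log n := by
  refine ⟨1, one_pos, 2, fun n hn => ?_⟩
  have hn1 : (1:ℝ) < n := by exact_mod_cast lt_of_lt_of_le one_lt_two hn
  have hn0 : (0:ℝ) < n := by linarith
  have hnne : (n:ℝ) ≠ 0 := ne_of_gt hn0
  have hlog : 0 < Real.log n := Real.log_pos hn1
  set r : ℝ := (n:ℝ) ^ ((1:ℝ)/n) with hr
  have hr1 : 1 < r := by
    rw [hr]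
    apply Real.one_lt_rpow_iff_of_pos hn0 |>.2
    exact Or.inl ⟨hn1, by positivity⟩
  -- each term
  have hterm : ∀ i ∈ Finset.Icc 1 n,
      (n:ℝ) * (n:ℝ) ^ (((n:ℝ)-i)/n) = (n:ℝ) * r ^ (n - i) := by
    intro i hi
    simp only [Finset.mem_Icc] at hi
    congr 1
    rw [hr, ← Real.rpow_natCast ((n:ℝ) ^ ((1:ℝ)/n)) (n-i),
      ← Real.rpow_mul (le_of_lt hn0)]
    congr 1
    have hc : ((n - i : ℕ):ℝ) = (n:ℝ) - i := by
      rw [Nat.cast_sub hi.2]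
    rw [hc]; ring
  rw [Finset.sum_congr rfl hterm, ← Finset.mul_sum]
  -- reindex
  have hre : ∑ i ∈ Finset.Icc 1 n, r ^ (n - i) = ∑ j ∈ Finset.range n, r ^ j := by
    apply Finset.sum_nbij' (fun i => n - i) (fun j => n - j)
    · intro i hi
      simp only [Finset.mem_Icc] at hi
      simp only [Finset.mem_range]
      omega
    · intro j hj
      simp only [Finset.mem_range] at hj
      simp only [Finset.mem_Icc]
      omega
    · intro i hi
      simp only [Finset.mem_Icc] at hi
      omega
    · intro j hj
      simp only [Finset.mem_range] at hj
      omega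
    · intro i hi; rfl
  rw [hre, geom_sum_eq (ne_of_gt hr1)]
  have hrn : r ^ n = (n:ℝ) := by
    rw [hr, ← Real.rpow_natCast ((n:ℝ) ^ ((1:ℝ)/n)) n, ← Real.rpow_mul (le_of_lt hn0),
      one_div, inv_mul_cancel₀ hnne, Real.rpow_one]
  rw [hrn]
  have hrlb : Real.log n / n ≤ r - 1 := by
    have := Real.add_one_le_exp (Real.log n / n)
    have hre2 : r = Real.exp (Real.log n / n) := by
      rw [hr, Real.rpow_def_of_pos hn0]
      ring_nf
    rw [hre2]; linarith
  have hd0 : 0 < r - 1 := by linarith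
  have hd1 : (0:ℝ) < Real.log n / n := by positivity
  have h1 : ((n:ℝ) - 1) / (r - 1) ≤ ((n:ℝ) - 1) / (Real.log n / n) :=
    div_le_div_of_nonneg_left (by linarith) hd1 hrlb
  have h2 : ((n:ℝ) - 1) / (Real.log n / n) = ((n:ℝ) - 1) * n / Real.log n := by
    field_simp
  calc (n:ℝ) * (((n:ℝ) - 1) / (r - 1))
      ≤ (n:ℝ) * (((n:ℝ) - 1) * n / Real.log n) := by
        apply mul_le_mul_of_nonneg_left _ (le_of_lt hn0)
        rw [← h2]; exact h1
    _ ≤ 1 * (n:ℝ) ^ 3 / Real.log n := by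
        rw [mul_div_assoc']
        apply div_le_div_of_nonneg_right ?_ hlog.le
        nlinarith
end

section
/- For every constant ε with 0 < ε < 1/2, there exists a constant C and N such that for all n ≥ N, ∑_{i=1}^{n} (n/i) · n^{i/n} ≤ C · n^{3/2+ε} · ln n. -/
theorem stmt_13 (ε : ℝ) (hε0 : 0 < ε) (hε1 : ε < 1 / 2) :
    ∃ C : ℝ, ∃ N : ℕ, ∀ n : ℕ, N ≤ n →
      ∑ i ∈ Finset.Icc 1 ⌊(n : ℝ) * (1 / 2 + ε)⌋₊,
        ((n : ℝ) / i) * (n : ℝ) ^ ((i : ℝ) / n)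
        ≤ C * (n : ℝ) ^ ((3 : ℝ) / 2 + ε) * Real.log n := by
  refine ⟨2, 3, fun n hn => ?_⟩
  have hn3 : (3:ℝ) ≤ n := by exact_mod_cast hn
  have hn0 : (0:ℝ) < n := by linarith
  have hn1 : (1:ℝ) ≤ n := by linarith
  set m := ⌊(n : ℝ) * (1 / 2 + ε)⌋₊ with hm
  have hmle : (m:ℝ) ≤ (n:ℝ) * (1/2 + ε) := Nat.floor_le (by positivity)
  have hK : ∀ i ∈ Finset.Icc 1 m, ((n : ℝ) / i) * (n : ℝ) ^ ((i : ℝ) / n)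
      ≤ (n:ℝ) * (n : ℝ) ^ ((1:ℝ)/2 + ε) * (1 / i) := by
    intro i hi
    rw [Finset.mem_Icc] at hi
    have hi1 : (1:ℝ) ≤ i := by exact_mod_cast hi.1
    have him : (i:ℝ) ≤ m := by exact_mod_cast hi.2
    have hexp : (i:ℝ)/n ≤ 1/2 + ε := by
      rw [div_le_iff₀ hn0]
      calc (i:ℝ) ≤ (n:ℝ) * (1/2+ε) := him.trans hmle
        _ = (1/2+ε) * n := by ring
    have hrp : (n : ℝ) ^ ((i : ℝ) / n) ≤ (n:ℝ) ^ ((1:ℝ)/2 + ε) :=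
      Real.rpow_le_rpow_of_exponent_le hn1 hexp
    calc ((n : ℝ) / i) * (n : ℝ) ^ ((i : ℝ) / n)
        ≤ ((n : ℝ) / i) * (n:ℝ) ^ ((1:ℝ)/2 + ε) :=
          mul_le_mul_of_nonneg_left hrp (by positivity)
      _ = (n:ℝ) * (n : ℝ) ^ ((1:ℝ)/2 + ε) * (1 / i) := by ring
  have hsum : ∑ i ∈ Finset.Icc 1 m, ((n : ℝ) / i) * (n : ℝ) ^ ((i : ℝ) / n)
      ≤ (n:ℝ) * (n : ℝ) ^ ((1:ℝ)/2 + ε) * ∑ i ∈ Finset.Icc 1 m, (1 / (i:ℝ)) := by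
    rw [Finset.mul_sum]
    exact Finset.sum_le_sum hK
  have hlogmn : Real.log m ≤ Real.log n := by
    rcases Nat.eq_zero_or_pos m with h0 | hpos
    · simp [h0]
      exact Real.log_nonneg hn1
    · exact Real.log_le_log (by exact_mod_cast hpos)
        (hmle.trans (by nlinarith))
  have hharm : ∑ i ∈ Finset.Icc 1 m, (1 / (i:ℝ)) ≤ 1 + Real.log n := by
    have h1 : ∑ i ∈ Finset.Icc 1 m, (1 / (i:ℝ)) = ((harmonic m : ℚ) : ℝ) := by
      rw [harmonic_eq_sum_Icc]
      push_cast
      simp [one_div]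
    rw [h1]
    calc ((harmonic m : ℚ) : ℝ) ≤ 1 + Real.log m := harmonic_le_one_add_log m
      _ ≤ 1 + Real.log n := by linarith
  have hpow : (n:ℝ) * (n : ℝ) ^ ((1:ℝ)/2 + ε) = (n:ℝ) ^ ((3:ℝ)/2 + ε) := by
    rw [show (3:ℝ)/2 + ε = 1 + (1/2 + ε) by ring, Real.rpow_add hn0 1 (1/2+ε), Real.rpow_one]
  have hlog1 : (1:ℝ) ≤ Real.log n := by
    rw [Real.le_log_iff_exp_le hn0]
    calc Real.exp 1 ≤ 2.7182818286 := Real.exp_one_lt_d9.le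
      _ ≤ (n:ℝ) := by linarith
  have hA : (0:ℝ) ≤ (n:ℝ) ^ ((3:ℝ)/2 + ε) := by positivity
  calc ∑ i ∈ Finset.Icc 1 m, ((n : ℝ) / i) * (n : ℝ) ^ ((i : ℝ) / n)
      ≤ (n:ℝ) * (n : ℝ) ^ ((1:ℝ)/2 + ε) * ∑ i ∈ Finset.Icc 1 m, (1 / (i:ℝ)) := hsum
    _ ≤ (n:ℝ) * (n : ℝ) ^ ((1:ℝ)/2 + ε) * (1 + Real.log n) := by
        apply mul_le_mul_of_nonneg_left hharm (by positivity)
    _ = (n:ℝ) ^ ((3:ℝ)/2 + ε) * (1 + Real.log n) := by rw [hpow]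
    _ ≤ 2 * (n:ℝ) ^ ((3:ℝ)/2 + ε) * Real.log n := by nlinarith
end
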